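/- There exists a constant C₀ > 0 such that for all integers r ≥ 1 and p ≥ 1, (h(p)/h(1))·(p/(r+1)³)·(1 − (r+1)^{−2})^{p−1} ≤ C₀/r². -/
import Mathlib

noncomputable def hfun (k : ℕ) : ℝ := (Nat.choose (2 * k) k : ℝ) / 4 ^ k

lemma hfun_nonneg (k : ℕ) : 0 ≤ hfun k := by
  unfold hfun; positivity

lemma hfun_succ (p : ℕ) :
    hfun (p + 1) = hfun p * (2 * p + 1) / (2 * (p + 1)) := by
  have h := Nat.succ_mul_centralBinom_succ p
  have h2 : ((p+1 : ℕ) : ℝ) * (Nat.centralBinom (p+1) : ℝ)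
      = 2 * (2 * p + 1) * (Nat.centralBinom p : ℝ) := by
    exact_mod_cast congrArg (Nat.cast : ℕ → ℝ) h
  unfold hfun
  have hc : ∀ k : ℕ, (Nat.choose (2*k) k : ℝ) = (Nat.centralBinom k : ℝ) := by
    intro k; rfl
  rw [hc, hc]
  have hp1 : ((p:ℝ) + 1) ≠ 0 := by positivity
  field_simp
  push_cast at h2
  rw [pow_succ]
  linear_combination (2 * (4:ℝ)^p) * h2

lemma hfun_sq (p : ℕ) : (hfun p)^2 * (2 * p + 1) ≤ 1 := by
  induction p with
  | zero => simp [hfun]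
  | succ n ih =>
    rw [hfun_succ]
    have h1 : (0:ℝ) ≤ hfun n := hfun_nonneg n
    have h2 : (0:ℝ) < 2 * ((n:ℝ) + 1) := by positivity
    push_cast
    rw [div_pow, div_mul_eq_mul_div, div_le_one (by positivity)]
    nlinarith [sq_nonneg (hfun n), ih]

lemma hfun_le (p : ℕ) (hp : 1 ≤ p) : hfun p ≤ 1 / Real.sqrt p := by
  have hp0 : (0:ℝ) < p := by exact_mod_cast hp
  rw [le_div_iff₀ (Real.sqrt_pos.mpr hp0)]
  have h := hfun_sq p
  nlinarith [Real.sq_sqrt hp0.le, Real.sqrt_nonneg (p:ℝ), hfun_nonneg p,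
    sq_nonneg (hfun p * Real.sqrt p - 1)]

set_option maxHeartbeats 1000000 in
/-- There is C₀ > 0 with
(h(p)/h(1))·(p/(r+1)³)·(1 − (r+1)^{−2})^{p−1} ≤ C₀/r² for all r, p ≥ 1. -/
theorem perimeter_local_bound :
    ∃ C₀ : ℝ, 0 < C₀ ∧ ∀ r p : ℕ, 1 ≤ r → 1 ≤ p →
      (hfun p / hfun 1) * ((p : ℝ) / ((r : ℝ) + 1) ^ 3) *
          (1 - ((r : ℝ) + 1) ^ (-2 : ℤ)) ^ (p - 1) ≤
        C₀ / (r : ℝ) ^ 2 := by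
  refine ⟨6, by norm_num, ?_⟩
  intro r p hr hp
  obtain ⟨q, rfl⟩ : ∃ q, p = q + 1 := ⟨p - 1, (Nat.succ_pred_eq_of_pos hp).symm⟩
  set R : ℝ := (r:ℝ) + 1 with hR
  have hR1 : (1:ℝ) ≤ (r:ℝ) := by exact_mod_cast hr
  have hRpos : (0:ℝ) < R := by rw [hR]; linarith
  have hR2 : (2:ℝ) ≤ R := by rw [hR]; linarith
  set s : ℝ := R ^ (-2 : ℤ) with hs
  have hs_eq : s = 1 / R^2 := by rw [hs]; rw [zpow_neg, zpow_two]; ring_nf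
  have hs_pos : 0 < s := by rw [hs_eq]; positivity
  have hs_le : s ≤ 1/4 := by
    rw [hs_eq]
    rw [div_le_div_iff₀ (by positivity) (by norm_num)]
    nlinarith
  -- x = 1 - s, x^q ≤ exp(-s*q)
  have hx_nonneg : (0:ℝ) ≤ 1 - s := by linarith
  have hxq : (1 - s) ^ q ≤ Real.exp (-(s * q)) := by
    have h1 : (1 - s) ≤ Real.exp (-s) := by
      have := Real.add_one_le_exp (-s); linarith
    calc (1 - s)^q ≤ (Real.exp (-s))^q := pow_le_pow_left₀ hx_nonneg h1 q
      _ = Real.exp (-(s*q)) := by rw [← Real.exp_nat_mul]; ring_nf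
  -- hfun 1 = 1/2
  have h1 : hfun 1 = 1/2 := by unfold hfun; norm_num
  have hP : (0:ℝ) < (q:ℝ) + 1 := by positivity
  have hfle : hfun (q+1) ≤ 1 / Real.sqrt ((q:ℝ)+1) := by
    have := hfun_le (q+1) (by omega)
    push_cast at this; exact this
  have hsq_pos : 0 < Real.sqrt ((q:ℝ)+1) := Real.sqrt_pos.mpr hP
  have key : Real.sqrt (s * ((q:ℝ)+1)) * Real.exp (-(s * ((q:ℝ)+1))) ≤ 1 := by
    set t := s * ((q:ℝ)+1) with ht
    have ht0 : 0 ≤ t := by positivity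
    have h2 : Real.sqrt t ≤ Real.exp t := by
      have hst : Real.sqrt t ≤ (1 + t)/2 := by
        nlinarith [Real.sq_sqrt ht0, Real.sqrt_nonneg t, sq_nonneg (Real.sqrt t - 1)]
      have := Real.add_one_le_exp t
      linarith
    have h3 : Real.sqrt t * Real.exp (-t) ≤ Real.exp t * Real.exp (-t) :=
      mul_le_mul_of_nonneg_right h2 (Real.exp_pos _).le
    rw [← Real.exp_add] at h3
    simpa using h3
  -- assemble
  have hexp_s : Real.exp (-(s * ((q:ℝ)+1))) = Real.exp s * Real.exp (-(s * ((q:ℝ)+1+1))) := by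
    rw [← Real.exp_add]; ring_nf
  -- main chain
  have hLHS : (hfun (q+1) / hfun 1) * (((q:ℝ)+1) / R ^ 3) * (1 - s) ^ q
      ≤ 6 / R^2 := by
    have step1 : (hfun (q+1) / hfun 1) * (((q:ℝ)+1) / R ^ 3) * (1 - s) ^ q
        ≤ (2 / Real.sqrt ((q:ℝ)+1)) * (((q:ℝ)+1) / R^3) * Real.exp (-(s * ((q:ℝ)+1)) + s) := by
      have e1 : hfun (q+1) / hfun 1 ≤ 2 / Real.sqrt ((q:ℝ)+1) := by
        have h12 : hfun (q+1) / hfun 1 = 2 * hfun (q+1) := by rw [h1]; ring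
        rw [h12]
        calc 2 * hfun (q+1) ≤ 2 * (1 / Real.sqrt ((q:ℝ)+1)) := by
              have := hfle; gcongr
          _ = 2 / Real.sqrt ((q:ℝ)+1) := by ring
      have e2 : (1-s)^q ≤ Real.exp (-(s * ((q:ℝ)+1)) + s) := by
        have : -(s * (q:ℝ)) = -(s * ((q:ℝ)+1)) + s := by ring
        rw [← this]; exact hxq
      have pos1 : (0:ℝ) ≤ ((q:ℝ)+1)/R^3 := by positivity
      have pos2 : (0:ℝ) ≤ hfun (q+1) / hfun 1 := by
        have := hfun_nonneg (q+1); rw [h1]; positivity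
      have pos3 : (0:ℝ) ≤ 2 / Real.sqrt ((q:ℝ)+1) := by positivity
      exact mul_le_mul (mul_le_mul e1 le_rfl pos1 pos3)
        e2 (pow_nonneg hx_nonneg q) (by positivity)
    refine step1.trans ?_
    -- (2/√P)*(P/R³)*exp(-sP+s) = 2 √P exp(-sP) exp(s) / R³
    -- √P exp(-sP) = (1/√s) √(sP) exp(-sP) ≤ 1/√s = R
    have hsqP : Real.sqrt ((q:ℝ)+1) * Real.sqrt ((q:ℝ)+1) = (q:ℝ)+1 :=
      Real.mul_self_sqrt hP.le
    have hsqs : Real.sqrt (s * ((q:ℝ)+1)) = Real.sqrt s * Real.sqrt ((q:ℝ)+1) :=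
      Real.sqrt_mul hs_pos.le _
    have hsqrt_s : Real.sqrt s = 1 / R := by
      have h' : (1:ℝ)/R^2 = (1/R)^2 := by field_simp
      rw [hs_eq, h', Real.sqrt_sq (by positivity)]
      
    have hkey2 : Real.sqrt ((q:ℝ)+1) * Real.exp (-(s * ((q:ℝ)+1))) ≤ R := by
      have := key
      rw [hsqs, hsqrt_s] at this
      have hRinv : (0:ℝ) < 1 / R := by positivity
      calc Real.sqrt ((q:ℝ)+1) * Real.exp (-(s * ((q:ℝ)+1)))
          = R * ((1/R) * Real.sqrt ((q:ℝ)+1) * Real.exp (-(s * ((q:ℝ)+1)))) := by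
            field_simp
        _ ≤ R * 1 := by
            apply mul_le_mul_of_nonneg_left _ hRpos.le
            exact this
        _ = R := mul_one R
    have hexps : Real.exp s ≤ 3 := by
      calc Real.exp s ≤ Real.exp 1 := Real.exp_le_exp.mpr (by linarith)
        _ ≤ 3 := by linarith [Real.exp_one_lt_d9]
    have hrw : (2 / Real.sqrt ((q:ℝ)+1)) * (((q:ℝ)+1) / R^3) * Real.exp (-(s * ((q:ℝ)+1)) + s)
        = 2 * (Real.sqrt ((q:ℝ)+1) * Real.exp (-(s * ((q:ℝ)+1)))) * Real.exp s / R^3 := by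
      have hPdiv : ((q:ℝ)+1) / Real.sqrt ((q:ℝ)+1) = Real.sqrt ((q:ℝ)+1) := by
        rw [eq_comm, eq_div_iff hsq_pos.ne']; exact hsqP
      calc (2 / Real.sqrt ((q:ℝ)+1)) * (((q:ℝ)+1) / R^3) * Real.exp (-(s * ((q:ℝ)+1)) + s)
          = 2 * ((((q:ℝ)+1) / Real.sqrt ((q:ℝ)+1)) * Real.exp (-(s * ((q:ℝ)+1)))) * Real.exp s / R^3 := by
            rw [Real.exp_add]; ring
        _ = 2 * (Real.sqrt ((q:ℝ)+1) * Real.exp (-(s * ((q:ℝ)+1)))) * Real.exp s / R^3 := by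
            rw [hPdiv]
    rw [hrw]
    have e3 : 2 * (Real.sqrt ((q:ℝ)+1) * Real.exp (-(s * ((q:ℝ)+1)))) * Real.exp s ≤ 2 * R * 3 := by
      have hepos : 0 < Real.exp s := Real.exp_pos s
      have h0 : 0 ≤ Real.sqrt ((q:ℝ)+1) * Real.exp (-(s * ((q:ℝ)+1))) := by positivity
      nlinarith [hkey2, hexps, hepos, hRpos]
    calc 2 * (Real.sqrt ((q:ℝ)+1) * Real.exp (-(s * ((q:ℝ)+1)))) * Real.exp s / R^3
        ≤ (2 * R * 3) / R^3 := by gcongr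
      _ = 6 / R^2 := by field_simp; ring
  -- convert: goal has p = q+1, p-1 = q
  have h2 : (r:ℝ)^2 ≤ R^2 := by nlinarith
  have hr0 : (0:ℝ) < (r:ℝ)^2 := by
    have : (0:ℝ) < (r:ℝ) := by linarith
    positivity
  have hfin : (6:ℝ) / R^2 ≤ 6 / (r:ℝ)^2 :=
    div_le_div_of_nonneg_left (by norm_num) hr0 h2
  simpa [Nat.add_sub_cancel] using hLHS.trans hfin
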